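/- Let n ≥ 3, α ∈ (0, n-2), C > 0 with α < n - 2 - C/2, and ε > 0. Define u(ρ,t) = (ρ² + Ct)^{-α/2} + ε ρ^{2-n} for ρ > 0, t ≥ 0. Then w(x,t) = u(|x|, t) satisfies -∂_t w + Δw < 0 for x ∈ ℝ^n \ {0} and t > 0; i.e. w is a strict supersolution of the heat equation on ℝ^n \ {0}. -/

import Mathlib

/-!
Write `w(·, t) = g(‖·‖²)` with the profile `g(s) = (s + Ct)^{-α/2} + ε s^{(2-n)/2}`; for such a
function `Δw = 2n g'(s) + 4s g''(s)` at `s = ‖x‖²`. This operator kills `s^{(2-n)/2}` (the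
fundamental solution), and for `a = s + Ct ≥ s`, `p = -α/2` the heat operator applied to `a^p` is
`p a^{p-2} ((2n - C) a + 4(p - 1) s)`, which is negative because `2n - C > 2α + 4 = -4(p - 1)`.
-/

open scoped BigOperators

/-- The Euclidean Laplacian of `u : ℝⁿ → ℝ` at `x`. -/
noncomputable def laplacian (n : ℕ) (u : EuclideanSpace ℝ (Fin n) → ℝ)
    (x : EuclideanSpace ℝ (Fin n)) : ℝ :=
  ∑ i : Fin n, fderiv ℝ (fun y => fderiv ℝ u y (EuclideanSpace.single i 1)) x
    (EuclideanSpace.single i 1)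

open Filter Topology InnerProductSpace

lemma laplacian_comp_norm_sq {n : ℕ} {f f' : ℝ → ℝ} {f'' : ℝ} {x : EuclideanSpace ℝ (Fin n)}
    (hf : ∀ᶠ r in 𝓝 (‖x‖ ^ 2), HasDerivAt f (f' r) r) (hf' : HasDerivAt f' f'' (‖x‖ ^ 2)) :
    laplacian n (fun y => f (‖y‖ ^ 2)) x = 2 * n * f' (‖x‖ ^ 2) + 4 * ‖x‖ ^ 2 * f'' := by
  have hN (y : EuclideanSpace ℝ (Fin n)) :
      HasFDerivAt (fun y => ‖y‖ ^ 2) (2 • innerSL ℝ y) y :=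
    (hasStrictFDerivAt_norm_sq y).hasFDerivAt
  have hgrad : ∀ᶠ y in 𝓝 x, ∀ v,
      fderiv ℝ (fun y => f (‖y‖ ^ 2)) y v = f' (‖y‖ ^ 2) * (2 * ⟪y, v⟫_ℝ) := by
    filter_upwards [((continuous_norm.pow 2).tendsto x).eventually hf] with y hy v
    have hd : HasFDerivAt (fun y => f (‖y‖ ^ 2)) (f' (‖y‖ ^ 2) • 2 • innerSL ℝ y) y :=
      hy.comp_hasFDerivAt y (hN y)
    simp [hd.fderiv]
  have hsecond (i : Fin n) :
      fderiv ℝ (fun y => fderiv ℝ (fun y => f (‖y‖ ^ 2)) y (EuclideanSpace.single i 1)) x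
        (EuclideanSpace.single i 1) = 2 * f' (‖x‖ ^ 2) + 4 * f'' * x i ^ 2 := by
    have heq : (fun y => fderiv ℝ (fun y => f (‖y‖ ^ 2)) y (EuclideanSpace.single i 1)) =ᶠ[𝓝 x]
        fun y => f' (‖y‖ ^ 2) * (2 * ⟪y, EuclideanSpace.single i 1⟫_ℝ) :=
      hgrad.mono fun y hy => hy _
    have hd : HasFDerivAt (fun y => f' (‖y‖ ^ 2) * (2 * ⟪y, EuclideanSpace.single i 1⟫_ℝ)) _ x :=
      (hf'.comp_hasFDerivAt x (hN x)).mul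
        (((hasFDerivAt_id x).inner ℝ (hasFDerivAt_const _ x)).const_mul 2)
    rw [heq.fderiv_eq, hd.fderiv]
    simp only [Function.comp_apply, id_eq, EuclideanSpace.inner_single_right, Real.ringHom_apply,
      one_mul, add_apply, smul_apply, zero_apply, ContinuousLinearMap.comp_apply,
      ContinuousLinearMap.prod_apply, ContinuousLinearMap.id_apply, fderivInnerCLM_apply,
      inner_zero_right, inner_self_eq_norm_sq_to_K, PiLp.norm_single, norm_one, one_pow, zero_add,
      smul_eq_mul, mul_one, coe_innerSL_apply, nsmul_eq_mul, Nat.cast_ofNat]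
    ring
  simp only [laplacian, hsecond, Finset.sum_add_distrib, ← Finset.mul_sum,
    ← EuclideanSpace.real_norm_sq_eq]
  simp only [Finset.sum_const, Finset.card_univ, Fintype.card_fin, nsmul_eq_mul]
  ring

lemma rpow_eq_sq_rpow_half {a : ℝ} (ha : 0 ≤ a) (q : ℝ) : a ^ q = (a ^ 2) ^ (q / 2) := by
  rw [← Real.rpow_natCast, ← Real.rpow_mul ha, Nat.cast_ofNat, mul_div_cancel₀ q two_ne_zero]

lemma hasDerivAt_add_const_rpow {c p r : ℝ} (h : 0 < r + c) :
    HasDerivAt (fun r => (r + c) ^ p) (p * (r + c) ^ (p - 1)) r :=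
  (Real.hasDerivAt_rpow_const (Or.inl h.ne')).comp_add_const r c

lemma radial_laplacian_rpow_eq_zero {n : ℕ} {q s : ℝ} (hq : n + 2 * (q - 1) = 0) (hs : 0 < s) :
    2 * n * (q * s ^ (q - 1)) + 4 * s * (q * ((q - 1) * s ^ (q - 1 - 1))) = 0 := by
  rw [Real.rpow_sub_one hs.ne' (q - 1)]
  field_simp
  linear_combination 2 * q * s ^ (q - 1) * hq

lemma radial_heat_rpow_neg {n : ℕ} {p C c s : ℝ} (hp : p < 0)
    (hpC : 0 < 2 * n - C + 4 * (p - 1)) (hc : 0 ≤ c) (hs : 0 < s) :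
    -(C * (p * (s + c) ^ (p - 1))) + (2 * n * (p * (s + c) ^ (p - 1))
      + 4 * s * (p * ((p - 1) * (s + c) ^ (p - 1 - 1)))) < 0 := by
  have ha : 0 < s + c := by positivity
  have hpow : 0 < (s + c) ^ (p - 1 - 1) := Real.rpow_pos_of_pos ha _
  have hsplit : (s + c) ^ (p - 1) = (s + c) ^ (p - 1 - 1) * (s + c) := by
    rw [← Real.rpow_add_one ha.ne', sub_add_cancel]
  have hbracket : 0 < (2 * n - C) * (s + c) + 4 * (p - 1) * s := by nlinarith
  calc _ = p * (s + c) ^ (p - 1 - 1) * ((2 * n - C) * (s + c) + 4 * (p - 1) * s) := by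
        rw [hsplit]; ring
    _ < 0 := mul_neg_of_neg_of_pos (mul_neg_of_neg_of_pos hp hpow) hbracket

theorem supersolution_heat_general (n : ℕ) (α C ε : ℝ)
    (hα : α ∈ Set.Ioo (0 : ℝ) ((n : ℝ) - 2)) (hC : 0 < C)
    (hαC : α < (n : ℝ) - 2 - C / 2)
    (w : EuclideanSpace ℝ (Fin n) → ℝ → ℝ)
    (hw : ∀ x t, w x t = (‖x‖ ^ 2 + C * t) ^ (-(α / 2)) + ε * ‖x‖ ^ ((2 : ℝ) - n)) :
    ∀ (x : EuclideanSpace ℝ (Fin n)) (t : ℝ), x ≠ 0 → 0 < t →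
      -(deriv (fun τ => w x τ) t) + laplacian n (fun y => w y t) x < 0 := by
  intro x t hx ht
  set p : ℝ := -(α / 2) with hp
  set q : ℝ := ((2 : ℝ) - n) / 2
  have hs : 0 < ‖x‖ ^ 2 := pow_pos (norm_pos_iff.mpr hx) 2
  have hc : 0 ≤ C * t := by positivity
  have hprofile : (fun y => w y t) = fun y => (‖y‖ ^ 2 + C * t) ^ p + ε * (‖y‖ ^ 2) ^ q := by
    funext y
    rw [hw, rpow_eq_sq_rpow_half (norm_nonneg y)]
  have hf : ∀ᶠ r in 𝓝 (‖x‖ ^ 2), HasDerivAt (fun r => (r + C * t) ^ p + ε * r ^ q)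
      (p * (r + C * t) ^ (p - 1) + ε * (q * r ^ (q - 1))) r := by
    filter_upwards [Ioi_mem_nhds hs] with r (hr : 0 < r)
    exact (hasDerivAt_add_const_rpow (by positivity)).add
      ((Real.hasDerivAt_rpow_const (Or.inl hr.ne')).const_mul ε)
  have hf' := ((hasDerivAt_add_const_rpow (p := p - 1) (add_pos_of_pos_of_nonneg hs hc)).const_mul
    p).add (((Real.hasDerivAt_rpow_const (p := q - 1) (Or.inl hs.ne')).const_mul q).const_mul ε)
  have htime : HasDerivAt (fun τ => w x τ) (C * (p * (‖x‖ ^ 2 + C * t) ^ (p - 1))) t := by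
    simp_rw [hw]
    have h := (((hasDerivAt_id' t).const_mul C).const_add (‖x‖ ^ 2)).rpow_const (p := p)
      (Or.inl (add_pos_of_pos_of_nonneg hs hc).ne')
    exact (h.add_const _).congr_deriv (by ring)
  rw [htime.deriv, hprofile, laplacian_comp_norm_sq hf hf']
  have hheat := radial_heat_rpow_neg (n := n) (p := p) (C := C)
    (by linarith [hα.1]) (by linarith) hc hs
  have hharmonic := radial_laplacian_rpow_eq_zero (n := n) (q := q) (by ring) hs
  linear_combination hheat + ε * hharmonic

/-- The function `w(x,t) = (|x|² + Ct)^{-α/2} + ε|x|^{2-n}` is a strict supersolution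
of the heat equation on `ℝⁿ \ {0}`: `-∂_t w + Δw < 0` for `x ≠ 0`, `t > 0`,
provided `0 < α < n-2` and `α < n - 2 - C/2`. -/
theorem supersolution_heat (n : ℕ) (hn : 3 ≤ n) (α C ε : ℝ)
    (hα : α ∈ Set.Ioo (0 : ℝ) ((n : ℝ) - 2)) (hC : 0 < C)
    (hαC : α < (n : ℝ) - 2 - C / 2) (hε : 0 < ε)
    (w : EuclideanSpace ℝ (Fin n) → ℝ → ℝ)
    (hw : ∀ x t, w x t = (‖x‖ ^ 2 + C * t) ^ (-(α / 2)) + ε * ‖x‖ ^ ((2 : ℝ) - n)) :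
    ∀ (x : EuclideanSpace ℝ (Fin n)) (t : ℝ), x ≠ 0 → 0 < t →
      -(deriv (fun τ => w x τ) t) + laplacian n (fun y => w y t) x < 0 :=
  supersolution_heat_general n α C ε hα hC hαC w hw
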